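/- If m' is an index at which |a_{m'}| = max_{0 ≤ m ≤ n} |a_m| and max_{0 ≤ m ≤ n} |a_m| > 0, then m' · |a_{m'}| ≤ max_{0 ≤ m ≤ n−1} Σ_{k=1}^n |a_{m∖k}|; in particular m' · max_k |ω_k| ≤ κ_A, where κ_A = (max_k |ω_k| / max_m |a_m|) · max_{0 ≤ m ≤ n−1} Σ_{k=1}^n |a_{m∖k}| is the condition of problem A. -/

import Mathlib

open Polynomial Finset

/-!
The derivative of `P = ∏ₖ (X - ωₖ)` is the sum of the reduced polynomials `P_{∖k}`, and the
`(m' - 1)`-th coefficient of `P'` is `m' · a_{m'}`. The triangle inequality therefore bounds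
`m' · |a_{m'}|` by `Σₖ |a_{m'-1∖k}|`; the bound on `m' · max |ωₖ|` is the same inequality
multiplied by `max |ωₖ| / |a_{m'}|`.
-/

theorem Polynomial.derivative_prod_X_sub_C {R ι : Type*} [CommRing R] [DecidableEq ι]
    (s : Finset ι) (ω : ι → R) :
    derivative (∏ j ∈ s, (X - C (ω j))) = ∑ k ∈ s, ∏ j ∈ s.erase k, (X - C (ω j)) := by
  simp only [derivative_prod_finset, derivative_X_sub_C, mul_one]

/-- Also true for `m = 0`, where the left-hand side vanishes and `m - 1` truncates to `0`. -/
theorem Polynomial.natCast_mul_norm_coeff_le_norm_coeff_derivative {𝕜 : Type*} [RCLike 𝕜]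
    (p : 𝕜[X]) (m : ℕ) : (m : ℝ) * ‖p.coeff m‖ ≤ ‖(derivative p).coeff (m - 1)‖ := by
  rcases m with _ | m
  · simp
  · rw [Nat.add_sub_cancel, coeff_derivative, ← Nat.cast_succ, norm_mul, RCLike.norm_natCast,
      mul_comm]

/-- if `|a_{m'}| = max_m |a_m| > 0`, then
`m'·|a_{m'}| ≤ max_{0 ≤ m ≤ n−1} Σ_k |a_{m∖k}|`, and consequently
`m' · max_k |ω_k| ≤ κ_A = (max_k |ω_k| / max_m |a_m|) · max_{0 ≤ m ≤ n−1} Σ_k |a_{m∖k}|`. -/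
theorem condition_lower_bound (n : ℕ) (hn : 1 ≤ n) (ω : Fin n → ℂ)
    (P : Polynomial ℂ) (hP : P = ∏ j, (Polynomial.X - Polynomial.C (ω j)))
    (m' : ℕ) (hm'n : m' ≤ n)
    (hpos : 0 < Norm.norm (P.coeff m')) :
    (m' : ℝ) * Norm.norm (P.coeff m') ≤
      (Finset.range n).sup' (Finset.nonempty_range_iff.mpr (by omega)) (fun m =>
        ∑ k, Norm.norm
          ((∏ j ∈ Finset.univ.erase k, (Polynomial.X - Polynomial.C (ω j))).coeff m)) ∧
    (m' : ℝ) *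
        (Finset.univ.sup' ⟨⟨0, hn⟩, Finset.mem_univ _⟩ fun k => Norm.norm (ω k)) ≤
      ((Finset.univ.sup' ⟨⟨0, hn⟩, Finset.mem_univ _⟩ fun k => Norm.norm (ω k)) /
          Norm.norm (P.coeff m')) *
        (Finset.range n).sup' (Finset.nonempty_range_iff.mpr (by omega)) (fun m =>
          ∑ k, Norm.norm
            ((∏ j ∈ Finset.univ.erase k, (Polynomial.X - Polynomial.C (ω j))).coeff m)) := by
  set S := (Finset.range n).sup' (Finset.nonempty_range_iff.mpr (by omega)) (fun m =>
    ∑ k, ‖(∏ j ∈ Finset.univ.erase k, (X - C (ω j))).coeff m‖)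
  set M := Finset.univ.sup' ⟨⟨0, hn⟩, Finset.mem_univ _⟩ fun k => ‖ω k‖
  have hcoeff : (m' : ℝ) * ‖P.coeff m'‖ ≤ S :=
    calc (m' : ℝ) * ‖P.coeff m'‖ ≤ ‖(derivative P).coeff (m' - 1)‖ :=
          natCast_mul_norm_coeff_le_norm_coeff_derivative P m'
      _ ≤ ∑ k, ‖(∏ j ∈ Finset.univ.erase k, (X - C (ω j))).coeff (m' - 1)‖ := by
          rw [hP, derivative_prod_X_sub_C, finsetSum_coeff]
          exact norm_sum_le _ _
      _ ≤ S := Finset.le_sup' (fun m => ∑ k, ‖(∏ j ∈ Finset.univ.erase k,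
          (X - C (ω j))).coeff m‖) (Finset.mem_range.mpr (by omega))
  have hM : 0 ≤ M := (norm_nonneg _).trans (Finset.le_sup' (fun k => ‖ω k‖) (mem_univ ⟨0, hn⟩))
  refine ⟨hcoeff, ?_⟩
  calc (m' : ℝ) * M = M / ‖P.coeff m'‖ * ((m' : ℝ) * ‖P.coeff m'‖) := by
        field_simp
    _ ≤ M / ‖P.coeff m'‖ * S := by gcongr
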